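/- For every n ≥ 1, the Salajan discriminator satisfies n ≤ D_S(n) ≤ 2n − 1. -/

import Mathlib

/-!
The lower bound is pigeonhole: `n` pairwise incongruent residues need at least `n` classes.
For the upper bound, take the power of two `2^e` with `n ≤ 2^e ≤ 2n - 1`. Since
`u (j+1) = 3 u j + 5 (-1)^j`, the parity of `u j` alternates, so terms at odd distance already
differ modulo `2`. At even distance `d`, `4 (u (i+d) - u i) = 3^i (3^d - 1)`, and by lifting the
exponent `v₂(3^d - 1) = v₂(d) + 2`; a congruence modulo `2^e` would force `2^e ∣ d`, impossible
for `0 < d < 2^e`.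
-/

/-- The Salajan sequence: `u j = (3^j - 5*(-1)^j)/4`. -/
def salajanU (j : ℕ) : ℤ := ((3 : ℤ) ^ j - 5 * (-1) ^ j) / 4

/-- The Salajan discriminator: the least positive `m` such that `u 1, …, u n` are
pairwise incongruent modulo `m`. -/
noncomputable def salajanD (n : ℕ) : ℕ :=
  sInf {m : ℕ | 0 < m ∧ ∀ i j : ℕ, 1 ≤ i → i < j → j ≤ n →
    ¬ (salajanU i ≡ salajanU j [ZMOD (m : ℤ)])}

lemma le_of_forall_not_modEq (f : ℕ → ℤ) {n m : ℕ} (hm : 0 < m)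
    (h : ∀ i j : ℕ, 1 ≤ i → i < j → j ≤ n → ¬ f i ≡ f j [ZMOD m]) : n ≤ m := by
  have : NeZero m := ⟨hm.ne'⟩
  have hinj : Set.InjOn (fun i => (f i : ZMod m)) (Finset.Icc 1 n) := by
    intro i hi j hj hij
    simp only [Finset.coe_Icc, Set.mem_Icc] at hi hj
    rw [ZMod.intCast_eq_intCast_iff] at hij
    by_contra hne
    rcases lt_or_gt_of_ne hne with hlt | hlt
    · exact h i j hi.1 hlt hj.2 hij
    · exact h j i hj.1 hlt hi.2 hij.symm
  simpa using Finset.card_le_card_of_injOn _ (fun i _ => Finset.mem_univ _) hinj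

lemma padicValNat_two_three_pow_sub_one {d : ℕ} (hd : Even d) (hd0 : d ≠ 0) :
    padicValNat 2 (3 ^ d - 1) = padicValNat 2 d + 2 := by
  have hlte := padicValNat.pow_two_sub_pow (x := 3) (y := 1) (by norm_num) (by norm_num)
    (by norm_num) hd0 hd
  have h4 : padicValNat 2 4 = 2 := by
    rw [show (4 : ℕ) = 2 ^ 2 by rfl, padicValNat.prime_pow]
  norm_num [h4] at hlte
  omega

lemma two_pow_dvd_of_two_pow_add_two_dvd_three_pow_sub_one {e d : ℕ} (hd : Even d)
    (h : (2 : ℤ) ^ (e + 2) ∣ 3 ^ d - 1) : 2 ^ e ∣ d := by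
  rcases eq_or_ne d 0 with rfl | hd0
  · exact dvd_zero _
  have hpos : 3 ^ d - 1 ≠ 0 := by
    have := Nat.one_lt_pow hd0 (by norm_num : 1 < 3)
    omega
  have hcast : (3 : ℤ) ^ d - 1 = ((3 ^ d - 1 : ℕ) : ℤ) := by
    push_cast [Nat.one_le_pow d 3 (by norm_num)]
    rfl
  rw [hcast, show (2 : ℤ) ^ (e + 2) = ((2 ^ (e + 2) : ℕ) : ℤ) by norm_num,
    Int.natCast_dvd_natCast, padicValNat_dvd_iff_le hpos,
    padicValNat_two_three_pow_sub_one hd hd0] at h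
  rw [padicValNat_dvd_iff_le hd0]
  omega

lemma four_mul_salajanU (j : ℕ) : 4 * salajanU j = 3 ^ j - 5 * (-1) ^ j := by
  have h4 : (4 : ℤ) ∣ 3 ^ j - 5 * (-1) ^ j := by
    have h : (4 : ℤ) ∣ 3 ^ j - (-1) ^ j := by simpa using sub_dvd_pow_sub_pow (3 : ℤ) (-1) j
    rw [show (3 : ℤ) ^ j - 5 * (-1) ^ j = (3 ^ j - (-1) ^ j) - 4 * (-1) ^ j by ring]
    exact h.sub (dvd_mul_right _ _)
  exact Int.mul_ediv_cancel' h4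

lemma salajanU_succ (j : ℕ) : salajanU (j + 1) = 3 * salajanU j + 5 * (-1) ^ j := by
  refine mul_left_cancel₀ (four_ne_zero' ℤ) ?_
  rw [mul_add, mul_left_comm, four_mul_salajanU, four_mul_salajanU]
  ring

lemma even_salajanU_iff (j : ℕ) : Even (salajanU j) ↔ Odd j := by
  induction j with
  | zero => decide
  | succ j ih =>
    simp [salajanU_succ, parity_simps, ih, show ¬ Even (3 : ℤ) by decide,
      show ¬ Even (5 : ℤ) by decide]

lemma four_mul_salajanU_add_sub {i d : ℕ} (hd : Even d) :
    4 * (salajanU (i + d) - salajanU i) = 3 ^ i * (3 ^ d - 1) := by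
  rw [mul_sub, four_mul_salajanU, four_mul_salajanU, pow_add, pow_add, hd.neg_one_pow]
  ring

lemma salajanU_not_modEq_add (i : ℕ) {d e : ℕ} (hd0 : 0 < d) (hd : d < 2 ^ e) :
    ¬ salajanU i ≡ salajanU (i + d) [ZMOD 2 ^ e] := by
  intro h
  rcases Nat.even_or_odd d with hde | hdo
  · have h3 : (2 : ℤ) ^ (e + 2) ∣ 3 ^ i * (3 ^ d - 1) := by
      rw [← four_mul_salajanU_add_sub hde, pow_add, mul_comm]
      exact mul_dvd_mul_left 4 h.dvd
    have hcop : IsCoprime ((2 : ℤ) ^ (e + 2)) (3 ^ i) :=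
      (show IsCoprime (2 : ℤ) 3 from ⟨-1, 1, by norm_num⟩).pow
    have := two_pow_dvd_of_two_pow_add_two_dvd_three_pow_sub_one hde
      (hcop.dvd_of_dvd_mul_left h3)
    exact absurd (Nat.le_of_dvd hd0 this) (not_le.mpr hd)
  · have he : e ≠ 0 := by rintro rfl; omega
    have h2 : (2 : ℤ) ∣ salajanU (i + d) - salajanU i :=
      (dvd_pow_self 2 he).trans h.dvd
    rw [← even_iff_two_dvd, Int.even_sub, even_salajanU_iff, even_salajanU_iff] at h2
    grind

theorem salajanD_bounds (n : ℕ) (hn : 1 ≤ n) :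
    n ≤ salajanD n ∧ salajanD n ≤ 2 * n - 1 := by
  have hlt := Nat.lt_pow_succ_log_self one_lt_two (2 * n - 1)
  have hle := Nat.pow_log_le_self 2 (show 2 * n - 1 ≠ 0 by omega)
  generalize Nat.log 2 (2 * n - 1) = e at hlt hle
  rw [pow_succ] at hlt
  have hdisc : 0 < 2 ^ e ∧ ∀ i j : ℕ, 1 ≤ i → i < j → j ≤ n →
      ¬ salajanU i ≡ salajanU j [ZMOD ((2 ^ e : ℕ) : ℤ)] := by
    refine ⟨by positivity, fun i j _ hij hj => ?_⟩
    obtain ⟨d, rfl⟩ := Nat.exists_eq_add_of_le hij.le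
    push_cast
    exact salajanU_not_modEq_add i (by omega) (by omega)
  exact ⟨le_csInf ⟨_, hdisc⟩ fun m hm => le_of_forall_not_modEq salajanU hm.1 hm.2,
    (Nat.sInf_le hdisc).trans hle⟩
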